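/- Let X be a bounded operator on a complex Hilbert space H and q ∈ ℂ with |q| ≤ 1. Then w_q([[0, X],[X, 0]]) ≥ (|q|/2)·‖X‖ + (|q|/2)·|‖Re(X)‖ − ‖Im(X)‖|, where Re(X) = (X+X*)/2 and Im(X) = (X−X*)/(2i). -/

import Mathlib

/-!
Since `X = Re X + i Im X`, the left-hand side is at most `|q| max (‖Re X‖, ‖Im X‖)`.
For a unit vector `u`, the vectors `x = (u, u)/√2` and `z = (u, -u)/√2` are orthonormal with
`⟪x, T x⟫ = ⟪u, X u⟫` and `⟪z, T x⟫ = 0`, so `y = q̄ x + √(1 - |q|²) z` is a unit vector with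
`⟪y, x⟫ = q` and `⟪y, T x⟫ = q ⟪u, X u⟫`; hence `w_q(T) ≥ |q| |⟪u, X u⟫|`. Finally
`|⟪u, X u⟫|` dominates the quadratic forms of `Re X` and `Im X` at `u`, and the norm of a
self-adjoint operator is the supremum of its quadratic form on the unit sphere.
-/

noncomputable def qNumRadius {H : Type*} [NormedAddCommGroup H] [InnerProductSpace ℂ H]
    (q : ℂ) (T : H →L[ℂ] H) : ℝ :=
  sSup {r : ℝ | ∃ x y : H, ‖x‖ = 1 ∧ ‖y‖ = 1 ∧ (inner ℂ y x : ℂ) = q ∧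
    r = ‖(inner ℂ y (T x) : ℂ)‖}

/-- The `2 × 2` block operator matrix `[[Z, X],[Y, W]]` acting on `H ⊕ H`
(the `ℓ²` direct sum `WithLp 2 (H × H)`). -/
noncomputable def block2 {H : Type*} [NormedAddCommGroup H] [InnerProductSpace ℂ H]
    (Z X Y W : H →L[ℂ] H) : WithLp 2 (H × H) →L[ℂ] WithLp 2 (H × H) :=
  (((WithLp.prodContinuousLinearEquiv 2 ℂ H H).symm : (H × H) →L[ℂ] WithLp 2 (H × H)).comp
    ((Z.comp (ContinuousLinearMap.fst ℂ H H) + X.comp (ContinuousLinearMap.snd ℂ H H)).prod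
      (Y.comp (ContinuousLinearMap.fst ℂ H H) + W.comp (ContinuousLinearMap.snd ℂ H H)))).comp
    ((WithLp.prodContinuousLinearEquiv 2 ℂ H H : WithLp 2 (H × H) →L[ℂ] (H × H)))

/-- The real part `(X + X*)/2` of a bounded operator. -/
noncomputable def reOp {H : Type*} [NormedAddCommGroup H] [InnerProductSpace ℂ H]
    [CompleteSpace H] (X : H →L[ℂ] H) : H →L[ℂ] H :=
  (2⁻¹ : ℂ) • (X + ContinuousLinearMap.adjoint X)

/-- The imaginary part `(X - X*)/(2i)` of a bounded operator. -/
noncomputable def imOp {H : Type*} [NormedAddCommGroup H] [InnerProductSpace ℂ H]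
    [CompleteSpace H] (X : H →L[ℂ] H) : H →L[ℂ] H :=
  (2 * Complex.I)⁻¹ • (X - ContinuousLinearMap.adjoint X)

open ContinuousLinearMap RCLike
open scoped InnerProductSpace ComplexStarModule

section NumericalRadius

variable {K : Type*} [NormedAddCommGroup K] [InnerProductSpace ℂ K]

theorem qNumRadius_nonneg (q : ℂ) (T : K →L[ℂ] K) : 0 ≤ qNumRadius q T :=
  Real.sSup_nonneg fun _ ⟨_, _, _, _, _, hr⟩ ↦ hr ▸ norm_nonneg _

theorem norm_inner_le_qNumRadius (T : K →L[ℂ] K) {q : ℂ} {x y : K} (hx : ‖x‖ = 1)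
    (hy : ‖y‖ = 1) (hyx : ⟪y, x⟫_ℂ = q) : ‖⟪y, T x⟫_ℂ‖ ≤ qNumRadius q T := by
  refine le_csSup ⟨‖T‖, ?_⟩ ⟨x, y, hx, hy, hyx, rfl⟩
  rintro _ ⟨x, y, hx, hy, -, rfl⟩
  simpa [hx, hy] using
    (norm_inner_le_norm y (T x)).trans (mul_le_mul_of_nonneg_left (T.le_opNorm x) (norm_nonneg y))

theorem norm_mul_norm_inner_le_qNumRadius (T : K →L[ℂ] K) {q : ℂ} (hq : ‖q‖ ≤ 1) {x z : K}
    (hx : ‖x‖ = 1) (hz : ‖z‖ = 1) (hzx : ⟪z, x⟫_ℂ = 0) (hzT : ⟪z, T x⟫_ℂ = 0) :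
    ‖q‖ * ‖⟪x, T x⟫_ℂ‖ ≤ qNumRadius q T := by
  set s : ℝ := √(1 - ‖q‖ ^ 2)
  have hs : s ^ 2 = 1 - ‖q‖ ^ 2 := Real.sq_sqrt (by nlinarith [norm_nonneg q])
  set y : K := (starRingEnd ℂ) q • x + (s : ℂ) • z
  have hxz : ⟪x, z⟫_ℂ = 0 := by rw [← inner_conj_symm, hzx, map_zero]
  have hy : ‖y‖ = 1 := by
    have h := norm_add_sq_eq_norm_sq_add_norm_sq_of_inner_eq_zero (𝕜 := ℂ)
      ((starRingEnd ℂ) q • x) ((s : ℂ) • z)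
      (by rw [inner_smul_left, inner_smul_right, hxz, mul_zero, mul_zero])
    rw [norm_smul, norm_smul, hx, hz, Complex.norm_conj,
      Complex.norm_of_nonneg (Real.sqrt_nonneg _)] at h
    exact (pow_eq_one_iff_of_nonneg (norm_nonneg y) two_ne_zero).mp (by nlinarith)
  have hyx : ⟪y, x⟫_ℂ = q := by simp [y, hx, hzx]
  have hyT : ⟪y, T x⟫_ℂ = q * ⟪x, T x⟫_ℂ := by simp [y, hzT, mul_comm]
  simpa [hyT] using norm_inner_le_qNumRadius T hx hy hyx

end NumericalRadius

theorem IsSelfAdjoint.norm_le_of_forall_abs_re_inner_le {𝕜 E : Type*} [RCLike 𝕜]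
    [NormedAddCommGroup E] [InnerProductSpace 𝕜 E] [CompleteSpace E] {T : E →L[𝕜] E}
    (hT : IsSelfAdjoint T) {m : ℝ} (hm0 : 0 ≤ m)
    (hm : ∀ u : E, ‖u‖ = 1 → |re ⟪T u, u⟫_𝕜| ≤ m) : ‖T‖ ≤ m := by
  rw [T.norm_eq_iSup_rayleighQuotient hT.isSymmetric]
  refine ciSup_le fun x ↦ ?_
  rcases eq_or_ne x 0 with rfl | hx
  · simpa using hm0
  have hx' : ‖x‖ ≠ 0 := norm_ne_zero_iff.mpr hx
  have hu : ‖(‖x‖⁻¹ : 𝕜) • x‖ = 1 := by simp [norm_smul, hx']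
  rw [← T.rayleigh_smul x (c := (‖x‖⁻¹ : 𝕜)) (by simpa using hx'), rayleighQuotient, hu,
    one_pow, div_one]
  exact hm _ hu

section RealImaginaryParts

variable {H : Type*} [NormedAddCommGroup H] [InnerProductSpace ℂ H] [CompleteSpace H]

theorem reOp_eq_realPart (X : H →L[ℂ] H) : reOp X = ℜ X := by
  rw [realPart_apply_coe, reOp, star_eq_adjoint, ← Complex.coe_smul]
  norm_num

theorem imOp_eq_imaginaryPart (X : H →L[ℂ] H) : imOp X = ℑ X := by
  rw [imaginaryPart_apply_coe, imOp, star_eq_adjoint, ← Complex.coe_smul, smul_smul]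
  congr 1
  field_simp
  norm_num [Complex.I_sq]

theorem re_inner_realPart_apply (X : H →L[ℂ] H) (u : H) :
    re ⟪(ℜ X : H →L[ℂ] H) u, u⟫_ℂ = re ⟪X u, u⟫_ℂ := by
  have h := inner_re_symm (𝕜 := ℂ) u (X u)
  simp only [RCLike.re_to_complex] at h ⊢
  simp [realPart_apply_coe, star_eq_adjoint, adjoint_inner_left, h]
  ring

theorem abs_re_inner_realPart_apply_le (X : H →L[ℂ] H) (u : H) :
    |re ⟪(ℜ X : H →L[ℂ] H) u, u⟫_ℂ| ≤ ‖⟪X u, u⟫_ℂ‖ :=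
  re_inner_realPart_apply X u ▸ abs_re_le_norm _

theorem abs_re_inner_imaginaryPart_apply_le (X : H →L[ℂ] H) (u : H) :
    |re ⟪(ℑ X : H →L[ℂ] H) u, u⟫_ℂ| ≤ ‖⟪X u, u⟫_ℂ‖ := by
  calc |re ⟪(ℑ X : H →L[ℂ] H) u, u⟫_ℂ| = |re ⟪(Complex.I • X) u, u⟫_ℂ| := by
        rw [← neg_neg (ℑ X), ← realPart_I_smul, NegMemClass.coe_neg, neg_apply, inner_neg_left,
          map_neg, abs_neg, re_inner_realPart_apply]
    _ ≤ ‖⟪(Complex.I • X) u, u⟫_ℂ‖ := abs_re_le_norm _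
    _ = ‖⟪X u, u⟫_ℂ‖ := by simp

theorem norm_le_norm_realPart_add_norm_imaginaryPart (X : H →L[ℂ] H) :
    ‖X‖ ≤ ‖(ℜ X : H →L[ℂ] H)‖ + ‖(ℑ X : H →L[ℂ] H)‖ := by
  conv_lhs => rw [← realPart_add_I_smul_imaginaryPart X]
  refine (norm_add_le _ _).trans_eq ?_
  rw [norm_smul, Complex.norm_I, one_mul]

end RealImaginaryParts

section BlockOperator

variable {H : Type*} [NormedAddCommGroup H] [InnerProductSpace ℂ H]

theorem block2_toLp (Z X Y W : H →L[ℂ] H) (a b : H) :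
    block2 Z X Y W (WithLp.toLp 2 (a, b)) = WithLp.toLp 2 (Z a + X b, Y a + W b) := rfl

theorem norm_mul_norm_inner_le_qNumRadius_block2 (X : H →L[ℂ] H) {q : ℂ} (hq : ‖q‖ ≤ 1)
    {u : H} (hu : ‖u‖ = 1) : ‖q‖ * ‖⟪u, X u⟫_ℂ‖ ≤ qNumRadius q (block2 0 X X 0) := by
  set r : ℂ := (((√2)⁻¹ : ℝ) : ℂ)
  have hr : (starRingEnd ℂ) r * r = 2⁻¹ := by
    rw [Complex.conj_ofReal, ← Complex.ofReal_mul, ← mul_inv, Real.mul_self_sqrt zero_le_two]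
    norm_num
  have hru : ‖r • u‖ ^ 2 = 2⁻¹ := by
    rw [norm_smul, hu, mul_one, Complex.norm_of_nonneg (by positivity), inv_pow,
      Real.sq_sqrt zero_le_two]
  set x : WithLp 2 (H × H) := WithLp.toLp 2 (r • u, r • u)
  set z : WithLp 2 (H × H) := WithLp.toLp 2 (r • u, -(r • u))
  have hx : ‖x‖ = 1 := by
    rw [← pow_eq_one_iff_of_nonneg (norm_nonneg x) two_ne_zero, WithLp.prod_norm_sq_eq_of_L2]
    simp [x, hru]
    norm_num
  have hz : ‖z‖ = 1 := by
    rw [← pow_eq_one_iff_of_nonneg (norm_nonneg z) two_ne_zero, WithLp.prod_norm_sq_eq_of_L2]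
    simp [z, hru]
    norm_num
  have hzx : ⟪z, x⟫_ℂ = 0 := by
    simp only [x, z, WithLp.prod_inner_apply, inner_neg_left, add_neg_cancel]
  have hzT : ⟪z, block2 0 X X 0 x⟫_ℂ = 0 := by
    simp only [x, z, block2_toLp, zero_apply, zero_add, add_zero, WithLp.prod_inner_apply,
      inner_neg_left, add_neg_cancel]
  have hxT : ⟪x, block2 0 X X 0 x⟫_ℂ = ⟪u, X u⟫_ℂ := by
    simp only [x, block2_toLp, zero_apply, zero_add, add_zero, WithLp.prod_inner_apply,
      map_smul, smul_zero, inner_smul_left, inner_smul_right]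
    linear_combination (2 * ⟪u, X u⟫_ℂ) * hr
  simpa [hxT] using norm_mul_norm_inner_le_qNumRadius _ hq hx hz hzx hzT


theorem norm_mul_norm_le_qNumRadius_block2 [CompleteSpace H] {X S : H →L[ℂ] H}
    (hS : IsSelfAdjoint S) (hSX : ∀ u, |re ⟪S u, u⟫_ℂ| ≤ ‖⟪X u, u⟫_ℂ‖) {q : ℂ} (hq : ‖q‖ ≤ 1) :
    ‖q‖ * ‖S‖ ≤ qNumRadius q (block2 0 X X 0) := by
  rcases (norm_nonneg q).eq_or_lt with hq0 | hq0
  · rw [← hq0, zero_mul]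
    exact qNumRadius_nonneg _ _
  rw [mul_comm, ← le_div_iff₀ hq0]
  refine hS.norm_le_of_forall_abs_re_inner_le (div_nonneg (qNumRadius_nonneg _ _) hq0.le)
    fun u hu ↦ ?_
  rw [le_div_iff₀ hq0, mul_comm]
  calc ‖q‖ * |re ⟪S u, u⟫_ℂ| ≤ ‖q‖ * ‖⟪u, X u⟫_ℂ‖ := by
        rw [norm_inner_symm]
        exact mul_le_mul_of_nonneg_left (hSX u) hq0.le
    _ ≤ qNumRadius q (block2 0 X X 0) := norm_mul_norm_inner_le_qNumRadius_block2 X hq hu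

end BlockOperator

theorem stmt16 {H : Type*} [NormedAddCommGroup H] [InnerProductSpace ℂ H] [CompleteSpace H]
    (X : H →L[ℂ] H) (q : ℂ) (hq : ‖q‖ ≤ 1) :
    ‖q‖ / 2 * ‖X‖ + ‖q‖ / 2 * |‖reOp X‖ - ‖imOp X‖| ≤
      qNumRadius q (block2 0 X X 0) := by
  have hre := norm_mul_norm_le_qNumRadius_block2 (ℜ X).2
    (abs_re_inner_realPart_apply_le X) hq
  have him := norm_mul_norm_le_qNumRadius_block2 (ℑ X).2
    (abs_re_inner_imaginaryPart_apply_le X) hq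
  have hX := mul_le_mul_of_nonneg_left (norm_le_norm_realPart_add_norm_imaginaryPart X)
    (norm_nonneg q)
  rw [reOp_eq_realPart, imOp_eq_imaginaryPart]
  rcases abs_cases (‖(ℜ X : H →L[ℂ] H)‖ - ‖(ℑ X : H →L[ℂ] H)‖) with ⟨h, -⟩ | ⟨h, -⟩ <;>
    rw [h] <;> nlinarith
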